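/- arXiv:1410.0297 — 3 statements merged into one kernel-verified Lean document; each statement's English description precedes it below -/
import Mathlib

section
/- Fix integers c ≥ 0 and b ≥ 2. Every singleton set T = {t}, for t a positive integer, is [c,b]-good. -/
/-- The augmented generalized happy function `S_{[c,b]}`: it maps `a` to `c` plus the
sum of the squares of the base-`b` digits of `a`. -/
def S (c b a : ℕ) : ℕ := c + ((Nat.digits b a).map (· ^ 2)).sum


/-- `u ∈ U_{[c,b]}`: `u` is a positive integer that is a periodic point of `S_{[c,b]}`. -/
def inU (c b u : ℕ) : Prop := 0 < u ∧ ∃ m, 0 < m ∧ (S c b)^[m] u = u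


/-- A finite set `T` of positive integers is `[c,b]`-good if for each `u ∈ U_{[c,b]}`
there exist `n, k ≥ 0` such that `S_{[c,b]}^k (t + n) = u` for all `t ∈ T`. -/
def Good (c b : ℕ) (T : Finset ℕ) : Prop :=
  ∀ u, inU c b u → ∃ n k : ℕ, ∀ t ∈ T, (S c b)^[k] (t + n) = u

/-!
A periodic point `u` of `S` has a positive preimage `w`, namely its predecessor on the cycle.
Appending zeros to `w` does not change `S`, so for `N` large the number `b ^ N * w` lies above
`t`, and the shift `n = b ^ N * w - t` sends `t` to `u` in a single step.
-/

lemma S_pos (c b : ℕ) {a : ℕ} (ha : 0 < a) : 0 < S c b a := by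
  have hne : Nat.digits b a ≠ [] := Nat.digits_ne_nil_iff_ne_zero.mpr ha.ne'
  have hlast_mem : ((Nat.digits b a).getLast hne) ^ 2 ∈ (Nat.digits b a).map (· ^ 2) :=
    List.mem_map_of_mem (List.getLast_mem hne)
  have hlast_pos : 0 < ((Nat.digits b a).getLast hne) ^ 2 :=
    pow_pos (Nat.pos_of_ne_zero (Nat.getLast_digit_ne_zero b ha.ne')) 2
  have := List.single_le_sum (fun x _ => Nat.zero_le x) _ hlast_mem
  unfold S
  omega

lemma iterate_S_pos (c b : ℕ) {a : ℕ} (ha : 0 < a) (k : ℕ) : 0 < (S c b)^[k] a :=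
  Function.Iterate.rec (fun x => 0 < x) ha (fun _ hx => S_pos c b hx) k

lemma S_base_pow_mul (c : ℕ) {b : ℕ} (hb : 1 < b) (N : ℕ) {w : ℕ} (hw : 0 < w) :
    S c b (b ^ N * w) = S c b w := by
  simp [S, Nat.digits_base_pow_mul hb hw]

lemma exists_pos_S_eq_of_inU {c b u : ℕ} (hu : inU c b u) : ∃ w, 0 < w ∧ S c b w = u := by
  obtain ⟨hu_pos, m, hm, hperiodic⟩ := hu
  refine ⟨(S c b)^[m - 1] u, iterate_S_pos c b hu_pos _, ?_⟩
  rwa [← Function.iterate_succ_apply' (S c b), Nat.succ_eq_add_one, Nat.sub_add_cancel hm]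

theorem stmt_8_general (c b : ℕ) (hb : 2 ≤ b) (t : ℕ) :
    Good c b {t} := by
  intro u hu
  obtain ⟨w, hw_pos, hSw⟩ := exists_pos_S_eq_of_inU hu
  obtain ⟨N, hN⟩ := pow_unbounded_of_one_lt t hb
  have ht_le : t ≤ b ^ N * w := hN.le.trans (Nat.le_mul_of_pos_right _ hw_pos)
  refine ⟨b ^ N * w - t, 1, fun s hs => ?_⟩
  rw [Finset.mem_singleton.mp hs, Nat.add_sub_cancel' ht_le, Function.iterate_one,
    S_base_pow_mul c hb N hw_pos, hSw]

theorem stmt_8 (c b : ℕ) (hb : 2 ≤ b) (t : ℕ) (ht : 0 < t) :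
    Good c b {t} :=
  stmt_8_general c b hb t
end

section
/- Fix integers c ≥ 0 and b ≥ 2, and set d = gcd(2, b-1). If T is a finite nonempty set of positive integers all of whose elements are congruent modulo d, then T is [c,b]-good. -/
/-!
Call `T` steerable when every large enough `v` equals `S^[k] (t + n)` for all `t ∈ T` at once.
Placing far to the left of `a` a block of digits with square sum `q` adds `q` to `S a`, so `T` is
steerable as soon as its image under `t ↦ S (t + n)` is. Two elements `t₁ < t₂` congruent modulo
`gcd 2 (b - 1)` can be shifted to some `ℓ, ℓ + δ` whose square digit sums differ by a multiple
`(b - 1) N`, and then further to `b^m + b N` and `b^m + N`, which `S` identifies. Strong induction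
on `#T` thus reduces to singletons, which are steerable directly. A periodic point `u` exceeds `c`,
so it is the image under `S` of arbitrarily large numbers, in particular of a steerable value.
-/

open Filter

def sqDigitSum (b a : ℕ) : ℕ := ((Nat.digits b a).map (· ^ 2)).sum

theorem S_eq (c b a : ℕ) : S c b a = c + sqDigitSum b a := rfl

@[simp]
theorem sqDigitSum_zero (b : ℕ) : sqDigitSum b 0 = 0 := by simp [sqDigitSum]

theorem sqDigitSum_pos (b : ℕ) {a : ℕ} (ha : a ≠ 0) : 0 < sqDigitSum b a := by
  by_contra! h
  have hzero : ∀ x ∈ Nat.digits b a, x = 0 := by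
    simpa [sqDigitSum, List.sum_eq_zero_iff] using h
  exact Nat.getLast_digit_ne_zero b ha (hzero _ (List.getLast_mem _))

theorem sum_map_sq_modEq_sum (l : List ℕ) : (l.map (· ^ 2)).sum ≡ l.sum [MOD 2] := by
  rw [← ZMod.natCast_eq_natCast_iff]
  simp [Nat.cast_list_sum, Function.comp_def, ZMod.pow_card]

theorem sqDigitSum_modEq {b d : ℕ} (hb : b ≡ 1 [MOD d]) (hd : d ∣ 2) (a : ℕ) :
    sqDigitSum b a ≡ a [MOD d] := calc
  sqDigitSum b a ≡ (Nat.digits b a).sum [MOD d] := (sum_map_sq_modEq_sum _).of_dvd hd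
  _ = Nat.ofDigits 1 (Nat.digits b a) := (Nat.ofDigits_one _).symm
  _ ≡ Nat.ofDigits b (Nat.digits b a) [MOD d] := Nat.ofDigits_modEq' _ _ _ hb.symm _
  _ = a := Nat.ofDigits_digits b a

theorem sqDigitSum_add_base_mul {b : ℕ} (hb : 2 ≤ b) {r : ℕ} (hr : r < b) (x : ℕ) :
    sqDigitSum b (r + b * x) = r ^ 2 + sqDigitSum b x := by
  by_cases h : r = 0 ∧ x = 0
  · simp [h]
  · rw [sqDigitSum, Nat.digits_add b hb r x hr (by tauto)]
    simp [sqDigitSum]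

theorem sqDigitSum_of_lt {b : ℕ} (hb : 2 ≤ b) {a : ℕ} (ha : a < b) : sqDigitSum b a = a ^ 2 := by
  simpa using sqDigitSum_add_base_mul hb ha 0

theorem sqDigitSum_add_pow_mul {b : ℕ} (hb : 2 ≤ b) {L r : ℕ} (hr : r < b ^ L) (x : ℕ) :
    sqDigitSum b (r + b ^ L * x) = sqDigitSum b r + sqDigitSum b x := by
  induction L generalizing r with
  | zero => simp_all
  | succ L ih =>
    have hq : r / b < b ^ L := Nat.div_lt_of_lt_mul (by rwa [← pow_succ'])
    have hrb : r % b < b := Nat.mod_lt r (by omega)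
    have hsplit : r + b ^ (L + 1) * x = r % b + b * (r / b + b ^ L * x) := by
      conv_lhs => rw [← Nat.mod_add_div r b]
      ring
    rw [hsplit, sqDigitSum_add_base_mul hb hrb, ih hq, ← Nat.mod_add_div r b,
      sqDigitSum_add_base_mul hb hrb, Nat.mod_add_div, add_assoc]

theorem sqDigitSum_pow_mul {b : ℕ} (hb : 2 ≤ b) (L x : ℕ) :
    sqDigitSum b (b ^ L * x) = sqDigitSum b x := by
  simpa using sqDigitSum_add_pow_mul hb (r := 0) (by positivity) x

theorem exists_sqDigitSum_eq {b : ℕ} (hb : 2 ≤ b) (q : ℕ) : ∃ x, sqDigitSum b x = q := by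
  refine ⟨Nat.ofDigits b (List.replicate q 1), ?_⟩
  rw [sqDigitSum, Nat.digits_ofDigits b hb]
  · simp
  · simp only [List.mem_replicate]; omega
  · intro h; simp [List.getLast_replicate]

theorem exists_sqDigitSum_add_eq_add {b : ℕ} (hb : 2 ≤ b) (q M : ℕ) :
    ∃ R, ∀ a < M, sqDigitSum b (a + R) = sqDigitSum b a + q := by
  obtain ⟨x, hx⟩ := exists_sqDigitSum_eq hb q
  refine ⟨b ^ M * x, fun a ha => ?_⟩
  rw [sqDigitSum_add_pow_mul hb (ha.trans (Nat.lt_pow_self hb)), hx]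

theorem exists_le_sqDigitSum_eq {b : ℕ} (hb : 2 ≤ b) {q : ℕ} (hq : 0 < q) (M : ℕ) :
    ∃ x, M ≤ x ∧ sqDigitSum b x = q := by
  obtain ⟨x, hx⟩ := exists_sqDigitSum_eq hb q
  have hx0 : x ≠ 0 := by rintro rfl; simp at hx; omega
  refine ⟨b ^ M * x, ?_, by rw [sqDigitSum_pow_mul hb, hx]⟩
  calc M ≤ b ^ M := (Nat.lt_pow_self hb).le
    _ ≤ b ^ M * x := Nat.le_mul_of_pos_right _ (Nat.pos_of_ne_zero hx0)

theorem exists_two_mul_modEq {n A : ℕ} (hn : 0 < n) (hA : Nat.gcd 2 n ∣ A) :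
    ∃ y, 0 < y ∧ y ≤ n ∧ 2 * y ≡ A [MOD n] := by
  -- `A * (n + 1) ≡ A` is even whatever the parity of `n`; halve it and move into `[1, n]`.
  have heven : 2 ∣ A * (n + 1) := by
    rcases Nat.even_or_odd n with hn2 | hn2
    · exact dvd_mul_of_dvd_left ((Nat.gcd_eq_left (even_iff_two_dvd.mp hn2)) ▸ hA) _
    · exact dvd_mul_of_dvd_right (even_iff_two_dvd.mp hn2.add_one) _
  obtain ⟨y₀, hy₀⟩ := heven
  refine ⟨(y₀ + n - 1) % n + 1, Nat.succ_pos _, Nat.mod_lt _ hn, ?_⟩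
  have hy : (y₀ + n - 1) % n + 1 ≡ y₀ [MOD n] := calc
    (y₀ + n - 1) % n + 1 ≡ y₀ + n - 1 + 1 [MOD n] := (Nat.mod_modEq _ n).add_right 1
    _ = y₀ + n := by omega
    _ ≡ y₀ [MOD n] := Nat.add_modEq_right
  calc 2 * ((y₀ + n - 1) % n + 1) ≡ 2 * y₀ [MOD n] := hy.mul_left 2
    _ = A + n * A := by rw [← hy₀]; ring
    _ ≡ A [MOD n] := by simp [Nat.ModEq]

theorem exists_sqDigitSum_eq_sqDigitSum_add_add_mul {b δ : ℕ} (hb : 2 ≤ b) (hδ : 0 < δ)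
    (hd : Nat.gcd 2 (b - 1) ∣ δ) (M : ℕ) :
    ∃ ℓ N, M ≤ ℓ ∧ sqDigitSum b ℓ = sqDigitSum b (ℓ + δ) + (b - 1) * N := by
  obtain ⟨n, rfl⟩ : ∃ n, b = n + 1 := ⟨b - 1, by omega⟩
  rw [Nat.add_sub_cancel] at hd ⊢
  obtain ⟨m, hm⟩ : ∃ m, M + δ < (n + 1) ^ m := ⟨M + δ, Nat.lt_pow_self hb⟩
  obtain ⟨E, hE⟩ : ∃ E, E + δ = (n + 1) ^ m := ⟨_, Nat.sub_add_cancel (by omega)⟩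
  have hEodd : Nat.gcd 2 n ∣ sqDigitSum (n + 1) E + 1 := by
    have hg2 := Nat.gcd_dvd_left 2 n
    have hb1 : n + 1 ≡ 1 [MOD Nat.gcd 2 n] := by
      simpa using (Nat.modEq_zero_iff_dvd.mpr (Nat.gcd_dvd_right 2 n)).add_right 1
    refine Nat.modEq_zero_iff_dvd.mp ?_
    calc sqDigitSum (n + 1) E + 1 ≡ E + (n + 1) ^ m [MOD Nat.gcd 2 n] :=
          (sqDigitSum_modEq hb1 hg2 E).add (by simpa using (hb1.pow m).symm)
      _ = 2 * E + δ := by omega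
      _ ≡ 0 [MOD Nat.gcd 2 n] :=
          Nat.modEq_zero_iff_dvd.mpr (dvd_add (dvd_mul_of_dvd_left hg2 E) hd)
  -- `ℓ = E + (n+1)^m * (n + (n+1) y')` has `ℓ + δ = (y'+1) (n+1)^(m+1)`, so the square digit sums
  -- differ by `sqDigitSum E + n^2 + 1 - 2 (y'+1)`; `y'` is chosen to make this a multiple of `n`.
  have hA : Nat.gcd 2 n ∣ sqDigitSum (n + 1) E + n ^ 2 + 1 := by
    simpa [add_right_comm] using dvd_add hEodd (dvd_pow (Nat.gcd_dvd_right 2 n) two_ne_zero)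
  obtain ⟨y, hy0, hyn, hy⟩ := exists_two_mul_modEq (by omega) hA
  obtain ⟨y', rfl⟩ : ∃ y', y = y' + 1 := ⟨y - 1, by omega⟩
  have h2y : 2 * (y' + 1) ≤ sqDigitSum (n + 1) E + n ^ 2 + 1 := by nlinarith
  obtain ⟨N, hN⟩ := (Nat.modEq_iff_dvd' h2y).mp hy
  refine ⟨E + (n + 1) ^ m * (n + (n + 1) * y'), N, by omega, ?_⟩
  have hℓδ : E + (n + 1) ^ m * (n + (n + 1) * y') + δ = (n + 1) ^ (m + 1) * (y' + 1) := by
    rw [add_right_comm, hE]; ring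
  rw [hℓδ, sqDigitSum_pow_mul hb, sqDigitSum_of_lt hb (a := y' + 1) (by omega),
    sqDigitSum_add_pow_mul hb (by omega), sqDigitSum_add_base_mul hb (by omega),
    sqDigitSum_of_lt hb (a := y') (by omega)]
  have : (y' + 1) ^ 2 = y' ^ 2 + 2 * y' + 1 := by ring
  omega

theorem S_modEq {b : ℕ} (hb : 1 ≤ b) (c : ℕ) {a a' : ℕ} (h : a ≡ a' [MOD Nat.gcd 2 (b - 1)]) :
    S c b a ≡ S c b a' [MOD Nat.gcd 2 (b - 1)] := by
  have hb1 : b ≡ 1 [MOD Nat.gcd 2 (b - 1)] :=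
    ((Nat.modEq_iff_dvd' hb).mpr (Nat.gcd_dvd_right 2 (b - 1))).symm
  have hd := Nat.gcd_dvd_left 2 (b - 1)
  exact .add_left c (((sqDigitSum_modEq hb1 hd a).trans h).trans (sqDigitSum_modEq hb1 hd a').symm)

theorem lt_of_inU {c b u : ℕ} (hu : inU c b u) : c < u := by
  obtain ⟨hu0, m, hm, hperiodic⟩ := hu
  obtain ⟨m, rfl⟩ : ∃ m', m = m' + 1 := ⟨m - 1, by omega⟩
  have hw : (S c b)^[m] u ≠ 0 := by
    refine Nat.pos_iff_ne_zero.mp (Function.Iterate.rec (0 < ·) hu0 (fun a ha => ?_) m)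
    exact Nat.lt_add_left c (sqDigitSum_pos b ha.ne')
  rw [← hperiodic, Function.iterate_succ_apply', S_eq]
  exact Nat.lt_add_of_pos_right (sqDigitSum_pos b hw)

theorem exists_add_S_S_eq {b : ℕ} (hb : 2 ≤ b) (c : ℕ) {t₁ t₂ : ℕ}
    (h : t₁ ≡ t₂ [MOD Nat.gcd 2 (b - 1)]) :
    ∃ n, S c b (S c b (t₁ + n)) = S c b (S c b (t₂ + n)) := by
  wlog hlt : t₁ < t₂ generalizing t₁ t₂
  · rcases (not_lt.mp hlt).eq_or_lt with rfl | hgt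
    · exact ⟨0, rfl⟩
    · obtain ⟨n, hn⟩ := this h.symm hgt
      exact ⟨n, hn.symm⟩
  obtain ⟨ℓ, N, hℓ, hsq⟩ := exists_sqDigitSum_eq_sqDigitSum_add_add_mul hb (Nat.sub_pos_of_lt hlt)
    ((Nat.modEq_iff_dvd' hlt.le).mp h) t₁
  set δ := t₂ - t₁
  -- Shift both so that they land on `b^m + b N` and `b^m + N`, which have equal square digit sums.
  set m := b * N + c + sqDigitSum b (ℓ + δ)
  have hm : m < b ^ m := Nat.lt_pow_self hb
  obtain ⟨R, hR⟩ :=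
    exists_sqDigitSum_add_eq_add hb (b ^ m + N - (c + sqDigitSum b (ℓ + δ))) (ℓ + δ + 1)
  have hbN : (b - 1) * N + N = b * N := by
    rw [← Nat.succ_mul, Nat.succ_eq_add_one, Nat.sub_add_cancel (by omega)]
  have h₁ : S c b (t₁ + (ℓ - t₁ + R)) = b ^ m * 1 + b * N := by
    rw [show t₁ + (ℓ - t₁ + R) = ℓ + R by omega, S_eq, hR ℓ (by omega), hsq]
    omega
  have h₂ : S c b (t₂ + (ℓ - t₁ + R)) = b ^ m * 1 + N := by
    rw [show t₂ + (ℓ - t₁ + R) = ℓ + δ + R by omega, S_eq, hR (ℓ + δ) (by omega)]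
    omega
  have hsqbN : sqDigitSum b (b * N) = sqDigitSum b N := by
    simpa using sqDigitSum_add_base_mul hb (r := 0) (by omega) N
  refine ⟨ℓ - t₁ + R, ?_⟩
  rw [h₁, h₂, S_eq, S_eq, add_comm _ (b * N), add_comm _ N, sqDigitSum_add_pow_mul hb (by omega),
    sqDigitSum_add_pow_mul hb (by omega), hsqbN]

def Steerable (c b : ℕ) (T : Finset ℕ) : Prop :=
  ∀ᶠ v in atTop, ∃ n k, ∀ t ∈ T, (S c b)^[k] (t + n) = v

theorem Steerable.mono {c b : ℕ} {T T' : Finset ℕ} (h : Steerable c b T) (hT : T' ⊆ T) :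
    Steerable c b T' :=
  Eventually.mono h fun _ ⟨n, k, hv⟩ => ⟨n, k, fun t ht => hv t (hT ht)⟩

theorem exists_le_S_eq {c b u : ℕ} (hb : 2 ≤ b) (hu : c < u) (M : ℕ) :
    ∃ x, M ≤ x ∧ S c b x = u := by
  obtain ⟨x, hx, hsq⟩ := exists_le_sqDigitSum_eq hb (Nat.sub_pos_of_lt hu) M
  exact ⟨x, hx, by rw [S_eq, hsq]; omega⟩

theorem steerable_singleton {b : ℕ} (hb : 2 ≤ b) (c t : ℕ) : Steerable c b {t} := by
  filter_upwards [eventually_gt_atTop c] with v hv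
  obtain ⟨x, hx, hSx⟩ := exists_le_S_eq hb hv t
  exact ⟨x - t, 1, fun t' ht' => by rwa [Finset.mem_singleton.mp ht', Nat.add_sub_cancel' hx]⟩

theorem Steerable.of_image_S_add {c b : ℕ} (hb : 2 ≤ b) {T : Finset ℕ} (n : ℕ)
    (h : Steerable c b (T.image fun t => S c b (t + n))) : Steerable c b T := by
  obtain ⟨M, hM⟩ := T.exists_nat_subset_range
  filter_upwards [h] with v ⟨n', k, hv⟩
  obtain ⟨R, hR⟩ := exists_sqDigitSum_add_eq_add hb n' (M + n)
  refine ⟨n + R, k + 1, fun t ht => ?_⟩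
  have hshift : S c b (t + n + R) = S c b (t + n) + n' := by
    have := Finset.mem_range.mp (hM ht)
    rw [S_eq, S_eq, hR _ (by omega), add_assoc]
  rw [Function.iterate_succ_apply, ← add_assoc, hshift]
  exact hv _ (Finset.mem_image_of_mem _ ht)

theorem steerable_of_modEq {b : ℕ} (hb : 2 ≤ b) (c : ℕ) (T : Finset ℕ)
    (hT : ∀ t₁ ∈ T, ∀ t₂ ∈ T, t₁ ≡ t₂ [MOD Nat.gcd 2 (b - 1)]) : Steerable c b T := by
  induction hcard : T.card using Nat.strong_induction_on generalizing T with
  | _ k ih =>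
  rcases le_or_gt T.card 1 with h1 | h1
  · obtain ⟨t, ht⟩ := Finset.card_le_one_iff_subset_singleton.mp h1
    exact (steerable_singleton hb c t).mono ht
  obtain ⟨t₁, ht₁, t₂, ht₂, hne⟩ := Finset.one_lt_card.mp h1
  obtain ⟨n, hn⟩ := exists_add_S_S_eq hb c (hT t₁ ht₁ t₂ ht₂)
  refine Steerable.of_image_S_add hb n (Steerable.of_image_S_add hb 0 ?_)
  simp only [Finset.image_image, Function.comp_def, add_zero]
  refine ih _ (hcard ▸ ?card) _ ?cong rfl
  case card =>
    exact Finset.card_image_le.lt_of_ne fun h => hne (Finset.card_image_iff.mp h ht₁ ht₂ hn)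
  case cong =>
    simp only [Finset.forall_mem_image]
    exact fun a ha a' ha' =>
      S_modEq (by omega) c (S_modEq (by omega) c ((hT a ha a' ha').add_right n))

theorem stmt_10_general (c b : ℕ) (hb : 2 ≤ b) (d : ℕ) (hd : d = Nat.gcd 2 (b - 1))
    (T : Finset ℕ)
    (h : ∀ t₁ ∈ T, ∀ t₂ ∈ T, t₁ ≡ t₂ [MOD d]) :
    Good c b T := by
  subst hd
  intro u hu
  obtain ⟨M, hM⟩ := eventually_atTop.mp (steerable_of_modEq hb c T h)
  obtain ⟨x, hxM, hx⟩ := exists_le_S_eq hb (lt_of_inU hu) M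
  obtain ⟨n, k, hnk⟩ := hM x hxM
  exact ⟨n, k + 1, fun t ht => by rw [Function.iterate_succ_apply', hnk t ht, hx]⟩

theorem stmt_10 (c b : ℕ) (hb : 2 ≤ b) (d : ℕ) (hd : d = Nat.gcd 2 (b - 1))
    (T : Finset ℕ) (hpos : ∀ t ∈ T, 0 < t) (hne : T.Nonempty)
    (h : ∀ t₁ ∈ T, ∀ t₂ ∈ T, t₁ ≡ t₂ [MOD d]) :
    Good c b T :=
  stmt_10_general c b hb d hd T h
end

section
/- Fix integers c ≥ 0 and b ≥ 2. Let F : ℤ⁺ → ℤ⁺ be a composition of a finite (possibly empty) sequence of the functions S_{[c,b]} and I, where I(t) = t + 1. If T is a finite set of positive integers such that the image F(T) is [c,b]-cycle-good, then T is [c,b]-cycle-good. -/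
/-- A finite set `T` of positive integers is `[c,b]`-cycle-good if for each cycle of
`S_{[c,b]}` (the orbit of a positive periodic point `u`), there exist `n, k ≥ 1` such
that `S_{[c,b]}^k (t + n)` lies in that cycle for all `t ∈ T`. -/
def CycleGood (c b : ℕ) (T : Finset ℕ) : Prop :=
  ∀ u, 0 < u → (∃ m, 0 < m ∧ (S c b)^[m] u = u) →
    ∃ n k : ℕ, 0 < n ∧ 0 < k ∧ ∀ t ∈ T, ∃ j : ℕ, (S c b)^[k] (t + n) = (S c b)^[j] u

/-!
Both generators can be pulled back through a shift of the argument. For `I` this is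
`(t + 1) + n = t + (n + 1)`. For `S_{[c,b]}`, given `n ≥ 1` choose `m` whose digit square sum
is `n` (the base-`b` repunit with `n` ones) and place its digits above those of every `t ∈ T`:
then `S(t + b^N m) = S(t) + n` for all `t ∈ T`, so one extra application of `S` turns the
shift `n` witnessing that `S(T)` is cycle-good into the shift `b^N m` for `T`.
-/

def digitSqSum (b a : ℕ) : ℕ := ((Nat.digits b a).map (· ^ 2)).sum

theorem S_eq_add_digitSqSum (c b a : ℕ) : S c b a = c + digitSqSum b a := rfl

@[simp]
theorem digitSqSum_zero (b : ℕ) : digitSqSum b 0 = 0 := by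
  simp [digitSqSum]

theorem digitSqSum_one_add_mul {b : ℕ} (hb : 1 < b) (m : ℕ) :
    digitSqSum b (1 + b * m) = 1 + digitSqSum b m := by
  simp [digitSqSum, Nat.digits_add b hb 1 m hb (Or.inl one_ne_zero)]

theorem digitSqSum_surjective {b : ℕ} (hb : 1 < b) : Function.Surjective (digitSqSum b) := by
  intro n
  induction n with
  | zero => exact ⟨0, digitSqSum_zero b⟩
  | succ n ih =>
    obtain ⟨m, hm⟩ := ih
    exact ⟨1 + b * m, by rw [digitSqSum_one_add_mul hb, hm, add_comm]⟩

theorem digitSqSum_add_pow_mul {b t N : ℕ} (hb : 1 < b) (hN : (Nat.digits b t).length ≤ N)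
    (m : ℕ) : digitSqSum b (t + b ^ N * m) = digitSqSum b t + digitSqSum b m := by
  rcases Nat.eq_zero_or_pos m with rfl | hm
  · simp
  obtain ⟨k, rfl⟩ := Nat.exists_eq_add_of_le hN
  rw [digitSqSum, ← Nat.digits_append_zeroes_append_digits hb hm]
  simp [digitSqSum, List.map_replicate]

theorem exists_S_add_eq_S_add {c b : ℕ} (hb : 1 < b) (T : Finset ℕ) {n : ℕ} (hn : 0 < n) :
    ∃ s, 0 < s ∧ ∀ t ∈ T, S c b (t + s) = S c b t + n := by
  obtain ⟨m, hm⟩ := digitSqSum_surjective hb n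
  have hm_pos : 0 < m := Nat.pos_of_ne_zero fun h => by simp [h] at hm; omega
  let N := T.sup fun t => (Nat.digits b t).length
  refine ⟨b ^ N * m, by positivity, fun t ht => ?_⟩
  have hN : (Nat.digits b t).length ≤ N := Finset.le_sup (f := fun t => (Nat.digits b t).length) ht
  rw [S_eq_add_digitSqSum, S_eq_add_digitSqSum, digitSqSum_add_pow_mul hb hN, hm, add_assoc]

namespace CycleGood

variable {c b : ℕ} {T : Finset ℕ}

theorem of_image_add_one (h : CycleGood c b (T.image (· + 1))) : CycleGood c b T := by
  intro u hu hcycle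
  obtain ⟨n, k, -, hk, hT⟩ := h u hu hcycle
  refine ⟨n + 1, k, n.succ_pos, hk, fun t ht => ?_⟩
  rw [← add_assoc, add_right_comm]
  exact hT (t + 1) (Finset.mem_image_of_mem _ ht)

theorem of_image_S (hb : 1 < b) (h : CycleGood c b (T.image (S c b))) : CycleGood c b T := by
  intro u hu hcycle
  obtain ⟨n, k, hn, -, hT⟩ := h u hu hcycle
  obtain ⟨s, hs, hshift⟩ := exists_S_add_eq_S_add (c := c) hb T hn
  refine ⟨s, k + 1, hs, k.succ_pos, fun t ht => ?_⟩
  rw [Function.iterate_succ_apply, hshift t ht]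
  exact hT (S c b t) (Finset.mem_image_of_mem _ ht)

theorem of_image_foldr (hb : 1 < b) {L : List (ℕ → ℕ)}
    (hL : ∀ f ∈ L, f = S c b ∨ f = (· + 1))
    (h : CycleGood c b (T.image (L.foldr (· ∘ ·) id))) : CycleGood c b T := by
  induction L with
  | nil => simpa using h
  | cons f L ih =>
    refine ih (fun g hg => hL g (List.mem_cons_of_mem f hg)) ?_
    rw [List.foldr_cons, ← Finset.image_image] at h
    rcases hL f List.mem_cons_self with rfl | rfl
    · exact of_image_S hb h
    · exact of_image_add_one h

end CycleGood

theorem stmt_16_general (c b : ℕ) (hb : 2 ≤ b) (F : ℕ → ℕ)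
    (hF : ∃ L : List (ℕ → ℕ), (∀ f ∈ L, f = S c b ∨ f = (· + 1)) ∧
      F = L.foldr (· ∘ ·) id)
    (T : Finset ℕ)
    (h : CycleGood c b (T.image F)) : CycleGood c b T := by
  obtain ⟨L, hL, rfl⟩ := hF
  exact CycleGood.of_image_foldr hb hL h

theorem stmt_16 (c b : ℕ) (hb : 2 ≤ b) (F : ℕ → ℕ)
    (hF : ∃ L : List (ℕ → ℕ), (∀ f ∈ L, f = S c b ∨ f = (· + 1)) ∧
      F = L.foldr (· ∘ ·) id)
    (T : Finset ℕ) (hpos : ∀ t ∈ T, 0 < t)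
    (h : CycleGood c b (T.image F)) : CycleGood c b T :=
  stmt_16_general c b hb F hF T h
end
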